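/- arXiv:1701.06466 — 4 statements merged into one kernel-verified Lean document; each statement's English description precedes it below -/
import Mathlib

section
/- Let c, r, d : [0,∞) → [0,∞) be bounded Lipschitz-continuous functions, let T > 0 and n₀ ≥ 0. Then there exists a unique continuous function n : [0,T] → ℝ satisfying n(t) = n₀ + ∫₀ᵗ ( c(n(s)) + (r(n(s)) − d(n(s)))·n(s) ) ds for all t ∈ [0,T], and this solution satisfies n(t) ≥ 0 for all t ∈ [0,T]. -/
open Set MeasureTheory intervalIntegral


noncomputable def Ff (c r d : ℝ → ℝ) : ℝ → ℝ := fun x => c x + (r x - d x) * x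
noncomputable def pj (Rc x : ℝ) : ℝ := max 0 (min x Rc)
noncomputable def Gf (c r d : ℝ → ℝ) (Rc : ℝ) (x : ℝ) : ℝ :=
  Ff c r d (pj Rc x) + max (-1) (min 1 (pj Rc x - x))

lemma pj_nonneg (Rc x : ℝ) : 0 ≤ pj Rc x := le_max_left _ _

lemma pj_le (Rc x : ℝ) (hRc : 0 ≤ Rc) : pj Rc x ≤ Rc := max_le hRc (min_le_right _ _)

lemma pj_abs_le_abs (Rc x : ℝ) : |pj Rc x| ≤ |x| := by
  rw [abs_of_nonneg (pj_nonneg Rc x)]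
  exact max_le (abs_nonneg _) ((min_le_left _ _).trans (le_abs_self _))

lemma pj_eq (Rc x : ℝ) (h0 : 0 ≤ x) (hR : x ≤ Rc) : pj Rc x = x := by
  unfold pj; rw [min_eq_left hR, max_eq_right h0]

lemma pj_of_nonpos (Rc x : ℝ) (hx : x ≤ 0) : pj Rc x = 0 :=
  max_eq_left ((min_le_left _ _).trans hx)

lemma pj_lip (Rc x y : ℝ) : |pj Rc x - pj Rc y| ≤ |x - y| := by
  unfold pj
  rw [max_comm 0 (min x Rc), max_comm 0 (min y Rc)]
  refine (abs_max_sub_max_le_abs _ _ _).trans ?_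
  refine (abs_min_sub_min_le_max x Rc y Rc).trans ?_
  simp

lemma grb_mono {δ K ε : ℝ} (hδ : 0 ≤ δ) (hK : 0 ≤ K) (hε : 0 ≤ ε) {s t : ℝ}
    (hst : s ≤ t) : gronwallBound δ K ε s ≤ gronwallBound δ K ε t := by
  rcases eq_or_ne K 0 with h | h
  · subst h
    rw [gronwallBound_K0]; dsimp only; nlinarith
  · have hK' : 0 < K := lt_of_le_of_ne hK (Ne.symm h)
    rw [gronwallBound_of_K_ne_0 h]; dsimp only
    have h1 : Real.exp (K * s) ≤ Real.exp (K * t) := Real.exp_le_exp.2 (by nlinarith)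
    have h2 : 0 ≤ ε / K := div_nonneg hε hK'.le
    have h3 : (0:ℝ) < Real.exp (K * s) := Real.exp_pos _
    nlinarith

section FG
variable {c r d : ℝ → ℝ} {Kc Kr Kd : NNReal} {Mc Mr Md : ℝ}

lemma Ff_cont (hc_lip : LipschitzWith Kc c) (hr_lip : LipschitzWith Kr r)
    (hd_lip : LipschitzWith Kd d) : Continuous (Ff c r d) :=
  hc_lip.continuous.add ((hr_lip.continuous.sub hd_lip.continuous).mul continuous_id)

lemma Ff_lip (hc_lip : LipschitzWith Kc c) (hr_lip : LipschitzWith Kr r)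
    (hd_lip : LipschitzWith Kd d)
    (hr_bdd : ∀ x, |r x| ≤ Mr) (hd_bdd : ∀ x, |d x| ≤ Md)
    {B : ℝ} (x y : ℝ) (hx : |x| ≤ B) (hy : |y| ≤ B) :
    |Ff c r d x - Ff c r d y| ≤ (Kc + Mr + Md + (Kr + Kd) * B) * |x - y| := by
  have hc := hc_lip.dist_le_mul x y
  have hr := hr_lip.dist_le_mul x y
  have hd := hd_lip.dist_le_mul x y
  simp only [Real.dist_eq] at hc hr hd
  have key : Ff c r d x - Ff c r d y
      = (c x - c y) + (r x - d x) * (x - y) + ((r x - r y) - (d x - d y)) * y := by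
    simp only [Ff]; ring
  rw [key]
  have habs : |(c x - c y) + (r x - d x) * (x - y) + ((r x - r y) - (d x - d y)) * y|
      ≤ |c x - c y| + |r x - d x| * |x - y| + |(r x - r y) - (d x - d y)| * |y| := by
    refine (abs_add_three _ _ _).trans ?_
    rw [abs_mul, abs_mul]
  have h2 : |r x - d x| ≤ Mr + Md :=
    (abs_sub _ _).trans (add_le_add (hr_bdd x) (hd_bdd x))
  have h3 : |(r x - r y) - (d x - d y)| ≤ ((Kr : ℝ) + Kd) * |x - y| := by
    refine (abs_sub _ _).trans ?_
    calc |r x - r y| + |d x - d y| ≤ (Kr : ℝ) * |x - y| + (Kd : ℝ) * |x - y| := add_le_add hr hd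
    _ = ((Kr : ℝ) + Kd) * |x - y| := by ring
  have hxy0 : (0:ℝ) ≤ |x - y| := abs_nonneg _
  have h4 : |(r x - r y) - (d x - d y)| * |y| ≤ (((Kr : ℝ) + Kd) * |x - y|) * B :=
    mul_le_mul h3 hy (abs_nonneg _) (by positivity)
  have h5 : |r x - d x| * |x - y| ≤ (Mr + Md) * |x - y| :=
    mul_le_mul_of_nonneg_right h2 hxy0
  have expand : ((Kc : ℝ) + Mr + Md + ((Kr : ℝ) + Kd) * B) * |x - y|
      = (Kc : ℝ) * |x - y| + (Mr + Md) * |x - y| + (((Kr : ℝ) + Kd) * |x - y|) * B := by ring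
  rw [expand]
  linarith

lemma Gf_lip (hc_lip : LipschitzWith Kc c) (hr_lip : LipschitzWith Kr r)
    (hd_lip : LipschitzWith Kd d)
    (hr_bdd : ∀ x, |r x| ≤ Mr) (hd_bdd : ∀ x, |d x| ≤ Md)
    (hMr : 0 ≤ Mr) (hMd : 0 ≤ Md)
    {Rc : ℝ} (hRc : 0 ≤ Rc) (x y : ℝ) :
    |Gf c r d Rc x - Gf c r d Rc y| ≤ (Kc + Mr + Md + (Kr + Kd) * Rc + 2) * |x - y| := by
  have hpx : |pj Rc x| ≤ Rc := by
    rw [abs_of_nonneg (pj_nonneg Rc x)]; exact pj_le Rc x hRc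
  have hpy : |pj Rc y| ≤ Rc := by
    rw [abs_of_nonneg (pj_nonneg Rc y)]; exact pj_le Rc y hRc
  have h1 := Ff_lip hc_lip hr_lip hd_lip hr_bdd hd_bdd (pj Rc x) (pj Rc y) hpx hpy
  have hplip := pj_lip Rc x y
  have hL0 : (0:ℝ) ≤ (Kc : ℝ) + Mr + Md + ((Kr:ℝ) + Kd) * Rc := by positivity
  have h1' : |Ff c r d (pj Rc x) - Ff c r d (pj Rc y)|
      ≤ ((Kc : ℝ) + Mr + Md + ((Kr:ℝ) + Kd) * Rc) * |x - y| :=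
    h1.trans (mul_le_mul_of_nonneg_left hplip hL0)
  have hphi : |max (-1) (min 1 (pj Rc x - x)) - max (-1) (min 1 (pj Rc y - y))|
      ≤ 2 * |x - y| := by
    rw [max_comm (-1) (min 1 (pj Rc x - x)), max_comm (-1) (min 1 (pj Rc y - y))]
    refine (abs_max_sub_max_le_abs _ _ _).trans ?_
    refine (abs_min_sub_min_le_max 1 (pj Rc x - x) 1 (pj Rc y - y)).trans ?_
    have : |(pj Rc x - x) - (pj Rc y - y)| ≤ 2 * |x - y| := by
      have : (pj Rc x - x) - (pj Rc y - y) = (pj Rc x - pj Rc y) - (x - y) := by ring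
      rw [this]
      refine (abs_sub _ _).trans ?_
      linarith [pj_lip Rc x y]
    simp only [sub_self, abs_zero]
    refine max_le ?_ this
    positivity
  have hsplit : |Gf c r d Rc x - Gf c r d Rc y|
      ≤ |Ff c r d (pj Rc x) - Ff c r d (pj Rc y)|
        + |max (-1) (min 1 (pj Rc x - x)) - max (-1) (min 1 (pj Rc y - y))| := by
    unfold Gf
    have : Ff c r d (pj Rc x) + max (-1) (min 1 (pj Rc x - x))
        - (Ff c r d (pj Rc y) + max (-1) (min 1 (pj Rc y - y)))
        = (Ff c r d (pj Rc x) - Ff c r d (pj Rc y))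
          + (max (-1) (min 1 (pj Rc x - x)) - max (-1) (min 1 (pj Rc y - y))) := by ring
    rw [this]
    exact abs_add_le _ _
  have expand : ((Kc:ℝ) + Mr + Md + ((Kr:ℝ) + Kd) * Rc + 2) * |x - y|
      = ((Kc:ℝ) + Mr + Md + ((Kr:ℝ) + Kd) * Rc) * |x - y| + 2 * |x - y| := by ring
  rw [expand]
  linarith

lemma phi_abs_le (Rc x : ℝ) : |max (-1) (min 1 (pj Rc x - x))| ≤ 1 := by
  rw [abs_le]
  constructor
  · exact le_max_left _ _
  · exact max_le (by norm_num) (min_le_left _ _)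

lemma Gf_bound_lin (hc_bdd : ∀ x, |c x| ≤ Mc) (hr_bdd : ∀ x, |r x| ≤ Mr)
    (hd_bdd : ∀ x, |d x| ≤ Md) (Rc x : ℝ) :
    |Gf c r d Rc x| ≤ (Mr + Md) * |x| + (Mc + 1) := by
  have h1 : |Ff c r d (pj Rc x)| ≤ Mc + (Mr + Md) * |x| := by
    have : |Ff c r d (pj Rc x)| ≤ |c (pj Rc x)| + |r (pj Rc x) - d (pj Rc x)| * |pj Rc x| := by
      simp only [Ff]
      refine (abs_add_le _ _).trans ?_
      rw [abs_mul]
    refine this.trans ?_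
    have h2 : |r (pj Rc x) - d (pj Rc x)| ≤ Mr + Md :=
      (abs_sub _ _).trans (add_le_add (hr_bdd _) (hd_bdd _))
    have h3 := pj_abs_le_abs Rc x
    have hMrMd : (0:ℝ) ≤ Mr + Md := by
      have := (abs_nonneg (r 0)).trans (hr_bdd 0)
      have := (abs_nonneg (d 0)).trans (hd_bdd 0)
      linarith
    have := mul_le_mul h2 h3 (abs_nonneg _) hMrMd
    linarith [hc_bdd (pj Rc x)]
  have h2 := phi_abs_le Rc x
  unfold Gf
  calc |Ff c r d (pj Rc x) + max (-1) (min 1 (pj Rc x - x))|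
      ≤ |Ff c r d (pj Rc x)| + |max (-1) (min 1 (pj Rc x - x))| := abs_add_le _ _
  _ ≤ (Mc + (Mr + Md) * |x|) + 1 := add_le_add h1 h2
  _ = (Mr + Md) * |x| + (Mc + 1) := by ring

lemma Gf_bound_const (hc_bdd : ∀ x, |c x| ≤ Mc) (hr_bdd : ∀ x, |r x| ≤ Mr)
    (hd_bdd : ∀ x, |d x| ≤ Md) {Rc : ℝ} (hRc : 0 ≤ Rc) (x : ℝ) :
    |Gf c r d Rc x| ≤ (Mr + Md) * Rc + (Mc + 1) := by
  have h1 : |Ff c r d (pj Rc x)| ≤ Mc + (Mr + Md) * Rc := by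
    have : |Ff c r d (pj Rc x)| ≤ |c (pj Rc x)| + |r (pj Rc x) - d (pj Rc x)| * |pj Rc x| := by
      simp only [Ff]
      refine (abs_add_le _ _).trans ?_
      rw [abs_mul]
    refine this.trans ?_
    have h2 : |r (pj Rc x) - d (pj Rc x)| ≤ Mr + Md :=
      (abs_sub _ _).trans (add_le_add (hr_bdd _) (hd_bdd _))
    have h3 : |pj Rc x| ≤ Rc := by
      rw [abs_of_nonneg (pj_nonneg Rc x)]; exact pj_le Rc x hRc
    have hMrMd : (0:ℝ) ≤ Mr + Md := by
      have := (abs_nonneg (r 0)).trans (hr_bdd 0)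
      have := (abs_nonneg (d 0)).trans (hd_bdd 0)
      linarith
    have := mul_le_mul h2 h3 (abs_nonneg _) hMrMd
    linarith [hc_bdd (pj Rc x)]
  have h2 := phi_abs_le Rc x
  unfold Gf
  calc |Ff c r d (pj Rc x) + max (-1) (min 1 (pj Rc x - x))|
      ≤ |Ff c r d (pj Rc x)| + |max (-1) (min 1 (pj Rc x - x))| := abs_add_le _ _
  _ ≤ (Mc + (Mr + Md) * Rc) + 1 := add_le_add h1 h2
  _ = (Mr + Md) * Rc + (Mc + 1) := by ring

lemma Gf_eq (Rc x : ℝ) (h0 : 0 ≤ x) (hR : x ≤ Rc) : Gf c r d Rc x = Ff c r d x := by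
  unfold Gf
  rw [pj_eq Rc x h0 hR, sub_self, min_eq_right (by norm_num : (0:ℝ) ≤ 1),
    max_eq_right (by norm_num : (-1:ℝ) ≤ 0), add_zero]

lemma Gf_nonneg_of_nonpos (hc0 : 0 ≤ c 0) (Rc : ℝ) {x : ℝ} (hx : x ≤ 0) :
    0 ≤ Gf c r d Rc x := by
  unfold Gf
  rw [pj_of_nonpos Rc x hx]
  have h1 : Ff c r d 0 = c 0 := by simp [Ff]
  rw [h1]
  have h2 : (0:ℝ) ≤ min 1 (0 - x) := le_min (by norm_num) (by linarith)
  have h3 : (0:ℝ) ≤ max (-1) (min 1 (0 - x)) := h2.trans (le_max_right _ _)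
  linarith
end FG

lemma derivIci_of_inteq {F : ℝ → ℝ} (hFc : Continuous F) {T n₀ : ℝ} (hT : 0 < T)
    {m : ℝ → ℝ} (hm : ContinuousOn m (Set.Icc 0 T))
    (heq : ∀ t ∈ Set.Icc (0:ℝ) T, m t = n₀ + ∫ s in (0:ℝ)..t, F (m s)) :
    ∀ t ∈ Set.Ico (0:ℝ) T, HasDerivWithinAt m (F (m t)) (Set.Ici t) t := by
  set m' : ℝ → ℝ := fun x => m (Set.projIcc 0 T hT.le x) with hm'def
  have hm'c : Continuous m' :=
    hm.comp_continuous (continuous_subtype_val.comp (continuous_projIcc))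
      (fun x => (Set.projIcc 0 T hT.le x).2)
  have hagree : ∀ x ∈ Set.Icc (0:ℝ) T, m' x = m x := by
    intro x hx
    simp only [hm'def, Set.projIcc_of_mem hT.le hx]
  have hg : Continuous fun s => F (m' s) := hFc.comp hm'c
  have hI : ∀ u : ℝ, HasDerivAt (fun u => n₀ + ∫ s in (0:ℝ)..u, F (m' s)) (F (m' u)) u := by
    intro u
    have := intervalIntegral.integral_hasDerivAt_right
      (hg.intervalIntegrable 0 u) (hg.stronglyMeasurableAtFilter volume (nhds u))
      hg.continuousAt
    exact this.const_add n₀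
  have hIm : ∀ x ∈ Set.Icc (0:ℝ) T, n₀ + (∫ s in (0:ℝ)..x, F (m' s)) = m x := by
    intro x hx
    rw [heq x hx]
    congr 1
    apply intervalIntegral.integral_congr
    intro s hs
    rw [Set.uIcc_of_le hx.1] at hs
    show F (m' s) = F (m s)
    rw [hagree s ⟨hs.1, hs.2.trans hx.2⟩]
  intro t ht
  have htT : t ∈ Set.Icc (0:ℝ) T := ⟨ht.1, ht.2.le⟩
  have h1 : HasDerivWithinAt (fun u => n₀ + ∫ s in (0:ℝ)..u, F (m' s)) (F (m' t))
      (Set.Icc t T) t := (hI t).hasDerivWithinAt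
  have h2 : HasDerivWithinAt m (F (m' t)) (Set.Icc t T) t := by
    refine h1.congr (fun x hx => (hIm x ⟨ht.1.trans hx.1, hx.2⟩).symm) (hIm t htT).symm
  have hmem : Set.Icc t T ∈ nhdsWithin t (Set.Ici t) := by
    rw [← Set.Ici_inter_Iic]
    exact inter_mem_nhdsWithin _ (Iic_mem_nhds ht.2)
  have h3 := h2.mono_of_mem_nhdsWithin hmem
  rwa [hagree t htT] at h3

/-- Well-posedness of the deterministic continuous limit: for bounded Lipschitz
rate functions `c, r, d` (nonnegative on `[0,∞)`), `T > 0` and `n₀ ≥ 0`, there is a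
unique continuous `n : [0,T] → ℝ` with
`n(t) = n₀ + ∫₀ᵗ (c(n(s)) + (r(n(s)) − d(n(s)))·n(s)) ds`, and it is nonnegative. -/
theorem stmt_4 (c r d : ℝ → ℝ) (Kc Kr Kd : NNReal) (Mc Mr Md : ℝ)
    (hc_lip : LipschitzWith Kc c) (hr_lip : LipschitzWith Kr r) (hd_lip : LipschitzWith Kd d)
    (hc_bdd : ∀ x : ℝ, |c x| ≤ Mc) (hr_bdd : ∀ x : ℝ, |r x| ≤ Mr) (hd_bdd : ∀ x : ℝ, |d x| ≤ Md)
    (hc_nonneg : ∀ x : ℝ, 0 ≤ x → 0 ≤ c x)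
    (hr_nonneg : ∀ x : ℝ, 0 ≤ x → 0 ≤ r x)
    (hd_nonneg : ∀ x : ℝ, 0 ≤ x → 0 ≤ d x)
    (T n₀ : ℝ) (hT : 0 < T) (hn₀ : 0 ≤ n₀) :
    ∃ n : ℝ → ℝ,
      (ContinuousOn n (Set.Icc 0 T) ∧
        (∀ t ∈ Set.Icc (0:ℝ) T,
          n t = n₀ + ∫ s in (0:ℝ)..t, (c (n s) + (r (n s) - d (n s)) * n s)) ∧
        (∀ t ∈ Set.Icc (0:ℝ) T, 0 ≤ n t)) ∧
      ∀ m : ℝ → ℝ, ContinuousOn m (Set.Icc 0 T) →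
        (∀ t ∈ Set.Icc (0:ℝ) T,
          m t = n₀ + ∫ s in (0:ℝ)..t, (c (m s) + (r (m s) - d (m s)) * m s)) →
        ∀ t ∈ Set.Icc (0:ℝ) T, m t = n t := by
  have hT0 : (0:ℝ) ≤ T := hT.le
  have hMc0 : 0 ≤ Mc := (abs_nonneg (c 0)).trans (hc_bdd 0)
  have hMr0 : 0 ≤ Mr := (abs_nonneg (r 0)).trans (hr_bdd 0)
  have hMd0 : 0 ≤ Md := (abs_nonneg (d 0)).trans (hd_bdd 0)
  have hFc : Continuous (Ff c r d) := Ff_cont hc_lip hr_lip hd_lip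
  -- constants
  set Rc : ℝ := gronwallBound n₀ (Mr + Md) (Mc + 1) T + 1 with hRcdef
  have hgb0 : 0 ≤ gronwallBound n₀ (Mr + Md) (Mc + 1) T := by
    have h1 : gronwallBound n₀ (Mr + Md) (Mc + 1) 0 ≤ gronwallBound n₀ (Mr + Md) (Mc + 1) T :=
      grb_mono hn₀ (by linarith) (by linarith) hT0
    rw [gronwallBound_x0] at h1
    linarith
  have hRc0 : (0:ℝ) ≤ Rc := by rw [hRcdef]; linarith
  set G : ℝ → ℝ := Gf c r d Rc with hGdef
  -- Picard-Lindelöf data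
  set C : ℝ := (Mr + Md) * Rc + (Mc + 1) with hCdef
  have hC0 : 0 ≤ C := by rw [hCdef]; positivity
  set L : ℝ := Kc + Mr + Md + (Kr + Kd) * Rc + 2 with hLdef
  have hL0 : 0 ≤ L := by rw [hLdef]; positivity
  have hGlipW : LipschitzWith L.toNNReal G := by
    refine LipschitzWith.of_dist_le_mul fun x y => ?_
    rw [Real.dist_eq, Real.dist_eq]
    refine (Gf_lip hc_lip hr_lip hd_lip hr_bdd hd_bdd hMr0 hMd0 hRc0 x y).trans ?_
    exact mul_le_mul_of_nonneg_right (Real.le_coe_toNNReal L) (abs_nonneg _)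
  have hpl : IsPicardLindelof (fun _ x => G x) (tmin := 0) (tmax := T) ⟨0, le_rfl, hT0⟩ n₀
      (C * T).toNNReal 0 C.toNNReal L.toNNReal :=
    IsPicardLindelof.of_time_independent
      (fun x _ => by
        rw [Real.norm_eq_abs, Real.coe_toNNReal _ hC0]
        exact Gf_bound_const hc_bdd hr_bdd hd_bdd hRc0 x)
      hGlipW.lipschitzOnWith
      (by simp [Real.coe_toNNReal _ hC0, Real.coe_toNNReal _ (mul_nonneg hC0 hT0), hT0])
  obtain ⟨f, hf0', hf⟩ := hpl.exists_eq_forall_mem_Icc_hasDerivWithinAt₀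
  have hf0 : f 0 = n₀ := hf0'
  have contf : ContinuousOn f (Set.Icc 0 T) := fun t ht => (hf t ht).continuousWithinAt
  -- derivative within Ici
  have hfIci : ∀ t ∈ Set.Ico (0:ℝ) T, HasDerivWithinAt f (G (f t)) (Set.Ici t) t := by
    intro t ht
    have h1 := (hf t (Set.Ico_subset_Icc_self ht)).mono (Set.Icc_subset_Icc ht.1 le_rfl)
    refine h1.mono_of_mem_nhdsWithin ?_
    rw [← Set.Ici_inter_Iic]
    exact inter_mem_nhdsWithin _ (Iic_mem_nhds ht.2)
  -- nonnegativity
  have hpos : ∀ t ∈ Set.Icc (0:ℝ) T, 0 ≤ f t := by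
    by_contra hcon
    push_neg at hcon
    obtain ⟨t1, ht1, hft1⟩ := hcon
    set S : Set ℝ := Set.Icc 0 t1 ∩ f ⁻¹' (Set.Ici 0) with hSdef
    have hSc : IsClosed S :=
      (contf.mono (Set.Icc_subset_Icc le_rfl ht1.2)).preimage_isClosed_of_isClosed
        isClosed_Icc isClosed_Ici
    have h0S : (0:ℝ) ∈ S := ⟨⟨le_rfl, ht1.1⟩, by simp [hf0, hn₀]⟩
    have hbdd : BddAbove S := ⟨t1, fun x hx => hx.1.2⟩
    set t2 := sSup S with ht2def
    have ht2S : t2 ∈ S := hSc.csSup_mem ⟨0, h0S⟩ hbdd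
    have ht2f : 0 ≤ f t2 := ht2S.2
    have ht2mem : t2 ∈ Set.Icc 0 t1 := ht2S.1
    have ht2lt : t2 < t1 :=
      lt_of_le_of_ne ht2mem.2 (fun h => by rw [h] at ht2f; linarith)
    have hneg : ∀ s, t2 < s → s ≤ t1 → f s < 0 := by
      intro s hs1 hs2
      by_contra hge
      push_neg at hge
      have hsS : s ∈ S := ⟨⟨ht2mem.1.trans hs1.le, hs2⟩, hge⟩
      exact absurd (le_csSup hbdd hsS) (not_le.2 hs1)
    have hsub : Set.Icc t2 t1 ⊆ Set.Icc 0 T := Set.Icc_subset_Icc ht2mem.1 ht1.2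
    have hD : ∀ x ∈ Set.Ioo t2 t1, HasDerivAt f (G (f x)) x := by
      intro x hx
      have hxI : x ∈ Set.Icc (0:ℝ) T := hsub ⟨hx.1.le, hx.2.le⟩
      exact (hf x hxI).hasDerivAt
        (Icc_mem_nhds (lt_of_le_of_lt ht2mem.1 hx.1) (lt_of_lt_of_le hx.2 ht1.2))
    have hmono : MonotoneOn f (Set.Icc t2 t1) := by
      refine monotoneOn_of_deriv_nonneg (convex_Icc t2 t1) (contf.mono hsub) ?_ ?_
      · intro x hx
        rw [interior_Icc] at hx
        exact ((hD x hx).differentiableAt).differentiableWithinAt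
      · intro x hx
        rw [interior_Icc] at hx
        rw [(hD x hx).deriv]
        exact Gf_nonneg_of_nonpos (hc_nonneg 0 le_rfl) Rc (hneg x hx.1 hx.2.le).le
    have := hmono (Set.left_mem_Icc.2 ht2mem.2) (Set.right_mem_Icc.2 ht2mem.2) ht2mem.2
    linarith
  -- a priori bound via Gronwall
  have habs : ∀ t ∈ Set.Icc (0:ℝ) T,
      ‖f t‖ ≤ gronwallBound n₀ (Mr + Md) (Mc + 1) (t - 0) := by
    refine norm_le_gronwallBound_of_norm_deriv_right_le contf hfIci ?_ ?_
    · rw [hf0, Real.norm_eq_abs, abs_of_nonneg hn₀]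
    · intro x hx
      rw [Real.norm_eq_abs, Real.norm_eq_abs]
      exact Gf_bound_lin hc_bdd hr_bdd hd_bdd Rc (f x)
  have hle : ∀ t ∈ Set.Icc (0:ℝ) T, f t ≤ Rc := by
    intro t ht
    have h1 := habs t ht
    rw [Real.norm_eq_abs, sub_zero] at h1
    have h2 : gronwallBound n₀ (Mr + Md) (Mc + 1) t ≤ gronwallBound n₀ (Mr + Md) (Mc + 1) T :=
      grb_mono hn₀ (by linarith) (by linarith) ht.2
    have := le_abs_self (f t)
    rw [hRcdef]
    linarith
  have hGF : ∀ t ∈ Set.Icc (0:ℝ) T, G (f t) = Ff c r d (f t) := fun t ht =>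
    Gf_eq Rc (f t) (hpos t ht) (hle t ht)
  -- integral equation
  have hFint : ContinuousOn (fun s => Ff c r d (f s)) (Set.Icc 0 T) :=
    hFc.comp_continuousOn contf
  have heqn : ∀ t ∈ Set.Icc (0:ℝ) T, f t = n₀ + ∫ s in (0:ℝ)..t, Ff c r d (f s) := by
    intro t ht
    have key : (∫ s in (0:ℝ)..t, Ff c r d (f s)) = f t - f 0 := by
      refine intervalIntegral.integral_eq_sub_of_hasDeriv_right_of_le ht.1
        (contf.mono (Set.Icc_subset_Icc le_rfl ht.2)) (fun x hx => ?_) ?_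
      · have hxI : x ∈ Set.Icc (0:ℝ) T := ⟨hx.1.le, hx.2.le.trans ht.2⟩
        have hDx : HasDerivAt f (G (f x)) x :=
          (hf x hxI).hasDerivAt (Icc_mem_nhds hx.1 (lt_of_lt_of_le hx.2 ht.2))
        have := hDx.hasDerivWithinAt (s := Set.Ioi x)
        rwa [hGF x hxI] at this
      · refine ContinuousOn.intervalIntegrable ?_
        rw [Set.uIcc_of_le ht.1]
        exact hFint.mono (Set.Icc_subset_Icc le_rfl ht.2)
    rw [key, hf0]
    ring
  refine ⟨f, ⟨contf, ?_, hpos⟩, ?_⟩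
  · intro t ht
    have := heqn t ht
    simpa only [Ff] using this
  -- uniqueness
  · intro m hm hmeq
    have hmeq' : ∀ t ∈ Set.Icc (0:ℝ) T, m t = n₀ + ∫ s in (0:ℝ)..t, Ff c r d (m s) := by
      intro t ht
      simpa only [Ff] using hmeq t ht
    have hmIci := derivIci_of_inteq hFc hT hm hmeq'
    have hnIci := derivIci_of_inteq hFc hT contf heqn
    obtain ⟨Bm, hBm⟩ := isCompact_Icc.exists_bound_of_continuousOn hm
    obtain ⟨Bn, hBn⟩ := isCompact_Icc.exists_bound_of_continuousOn contf
    set B : ℝ := max Bm Bn with hBdef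
    have hB0 : 0 ≤ B := by
      have := (norm_nonneg (m 0)).trans (hBm 0 ⟨le_rfl, hT0⟩)
      exact le_max_of_le_left this
    set Lu : ℝ := Kc + Mr + Md + (Kr + Kd) * B with hLudef
    have hv : ∀ _t : ℝ, LipschitzOnWith Lu.toNNReal (fun x => Ff c r d x)
        (Metric.closedBall (0:ℝ) B) := by
      intro t
      rw [lipschitzOnWith_iff_dist_le_mul]
      intro x hx y hy
      rw [Real.dist_eq, Real.dist_eq]
      rw [Metric.mem_closedBall, Real.dist_0_eq_abs] at hx hy
      refine (Ff_lip hc_lip hr_lip hd_lip hr_bdd hd_bdd x y hx hy).trans ?_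
      exact mul_le_mul_of_nonneg_right (Real.le_coe_toNNReal Lu) (abs_nonneg _)
    have hms : ∀ t ∈ Set.Ico (0:ℝ) T, m t ∈ Metric.closedBall (0:ℝ) B := by
      intro t ht
      rw [Metric.mem_closedBall, Real.dist_0_eq_abs]
      exact (hBm t (Set.Ico_subset_Icc_self ht)).trans (le_max_left _ _)
    have hns : ∀ t ∈ Set.Ico (0:ℝ) T, f t ∈ Metric.closedBall (0:ℝ) B := by
      intro t ht
      rw [Metric.mem_closedBall, Real.dist_0_eq_abs]
      exact (hBn t (Set.Ico_subset_Icc_self ht)).trans (le_max_right _ _)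
    have ha : m 0 = f 0 := by
      rw [hf0, hmeq' 0 ⟨le_rfl, hT0⟩, intervalIntegral.integral_same, add_zero]
    exact fun t ht =>
      ODE_solution_unique_of_mem_Icc_right (fun t _ => hv t) hm hmIci hms contf hnIci hns ha ht
end

section
/- Define F(n) = c + (r − d·exp(α(u − γn)))·n. If u ≤ (1/α)·ln(r/d), then F(n) ≥ c > 0 for all n ≥ 0; consequently, any differentiable function n : [0,∞) → [0,∞) with n′(t) = F(n(t)) for all t ≥ 0 satisfies n(t) ≥ n(0) + c·t for all t ≥ 0, and hence n(t) → +∞ as t → ∞. -/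
/-!
Since `exp (α (u - γ n)) ≤ exp (α u) ≤ r / d` for `n ≥ 0`, the factor `r - d exp (α (u - γ n))`
is nonnegative, so `F(n) ≥ c` on the nonnegative half-line. A nonnegative solution therefore
has slope at least `c`, i.e. `n(t) - c t` is monotone.
-/

/-- The right-hand side of the deterministic limiting bond equation. -/
noncomputable def Fb (α γ u c r d : ℝ) : ℝ → ℝ :=
  fun n => c + (r - d * Real.exp (α * (u - γ * n))) * n

open Set Filter

theorem le_Fb {α γ u c r d x : ℝ} (hα : 0 < α) (hγ : 0 ≤ γ) (hr : 0 < r) (hd : 0 < d)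
    (hu : u ≤ (1 / α) * Real.log (r / d)) (hx : 0 ≤ x) : c ≤ Fb α γ u c r d x := by
  have hexp : Real.exp (α * (u - γ * x)) ≤ r / d := by
    rw [← Real.le_log_iff_exp_le (by positivity)]
    calc α * (u - γ * x) ≤ α * u := by nlinarith [mul_nonneg hγ hx]
      _ ≤ Real.log (r / d) := by rwa [one_div, ← div_eq_inv_mul, le_div_iff₀' hα] at hu
  have hfactor : 0 ≤ r - d * Real.exp (α * (u - γ * x)) := by
    rw [le_div_iff₀' hd] at hexp
    linarith
  have := mul_nonneg hfactor hx
  simp only [Fb]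
  linarith

theorem add_mul_sub_le_of_hasDerivWithinAt_Ici {f f' : ℝ → ℝ} {a c : ℝ}
    (hf : ∀ t, a ≤ t → HasDerivWithinAt f (f' t) (Ici a) t) (hf' : ∀ t, a < t → c ≤ f' t)
    {t : ℝ} (ht : a ≤ t) : f a + c * (t - a) ≤ f t := by
  have hderiv : ∀ s, a ≤ s → HasDerivWithinAt (fun s => f s - c * s) (f' s - c) (Ici a) s :=
    fun s hs => (hf s hs).sub (hasDerivAt_const_mul c).hasDerivWithinAt
  have hmono : MonotoneOn (fun s => f s - c * s) (Ici a) := by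
    refine monotoneOn_of_hasDerivWithinAt_nonneg (f' := fun s => f' s - c) (convex_Ici a)
      (fun s hs => (hderiv s hs).continuousWithinAt) (fun s hs => ?_) (fun s hs => ?_)
    · rw [interior_Ici] at hs ⊢
      exact (hderiv s hs.le).mono Ioi_subset_Ici_self
    · rw [interior_Ici] at hs
      exact sub_nonneg.mpr (hf' s hs)
  have := hmono self_mem_Ici ht ht
  simp only at this
  linarith

theorem tendsto_atTop_of_add_mul_le {f : ℝ → ℝ} {c : ℝ} (hc : 0 < c)
    (hf : ∀ t, 0 ≤ t → f 0 + c * t ≤ f t) : Tendsto f atTop atTop :=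
  tendsto_atTop_mono' _ ((eventually_ge_atTop 0).mono hf)
    (tendsto_atTop_add_const_left _ _ (tendsto_id.const_mul_atTop hc))

theorem stmt_6_general (α γ u c r d : ℝ) (hα : 0 < α) (hγ : 0 < γ)
    (hc : 0 < c) (hr : 0 < r) (hd : 0 < d)
    (hu' : u ≤ (1 / α) * Real.log (r / d)) :
    (∀ x : ℝ, 0 ≤ x → c ≤ Fb α γ u c r d x) ∧
    ∀ n : ℝ → ℝ, (∀ t : ℝ, 0 ≤ t → 0 ≤ n t) →
      (∀ t : ℝ, 0 ≤ t → HasDerivWithinAt n (Fb α γ u c r d (n t)) (Set.Ici 0) t) →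
      (∀ t : ℝ, 0 ≤ t → n 0 + c * t ≤ n t) ∧
      Filter.Tendsto n Filter.atTop Filter.atTop := by
  have hF : ∀ x : ℝ, 0 ≤ x → c ≤ Fb α γ u c r d x := fun x => le_Fb hα hγ.le hr hd hu'
  refine ⟨hF, fun n hn hdn => ?_⟩
  have hlin : ∀ t : ℝ, 0 ≤ t → n 0 + c * t ≤ n t := fun t ht => by
    simpa using add_mul_sub_le_of_hasDerivWithinAt_Ici hdn
      (fun s hs => hF (n s) (hn s hs.le)) ht
  exact ⟨hlin, tendsto_atTop_of_add_mul_le hc hlin⟩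

/-- If `u ≤ (1/α)·ln(r/d)` then `F(n) ≥ c > 0` for all `n ≥ 0`; consequently any
nonnegative differentiable solution of `n′ = F(n)` on `[0,∞)` satisfies
`n(t) ≥ n(0) + c·t`, hence tends to `+∞`. -/
theorem stmt_6 (α γ u c r d : ℝ) (hα : 0 < α) (hγ : 0 < γ) (hu : 0 < u)
    (hc : 0 < c) (hr : 0 < r) (hd : 0 < d) (hdr : d < r)
    (hu' : u ≤ (1 / α) * Real.log (r / d)) :
    (∀ x : ℝ, 0 ≤ x → c ≤ Fb α γ u c r d x) ∧
    ∀ n : ℝ → ℝ, (∀ t : ℝ, 0 ≤ t → 0 ≤ n t) →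
      (∀ t : ℝ, 0 ≤ t → HasDerivWithinAt n (Fb α γ u c r d (n t)) (Set.Ici 0) t) →
      (∀ t : ℝ, 0 ≤ t → n 0 + c * t ≤ n t) ∧
      Filter.Tendsto n Filter.atTop Filter.atTop :=
  stmt_6_general α γ u c r d hα hγ hc hr hd hu'
end

section
/- Define F(n) = c + (r − d·exp(α(u − γn)))·n, assume d·e^(αu) > r, and let n̄ > 0 be the unique positive critical point of F. If F(n̄) < 0, then F has exactly two zeros n₁ and n₂ in [0,∞), they satisfy 0 < n₁ < n̄ < n₂ < ∞, and moreover F′(n₁) < 0 and F′(n₂) > 0 (so n₁ is a stable and n₂ an unstable stationary state of n′ = F(n)). -/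
lemma Fb_deriv (α γ u c r d : ℝ) :
    deriv (Fb α γ u c r d) =
      fun n => r - d * Real.exp (α * (u - γ * n)) * (1 - α * γ * n) := by
  funext n
  have h1 : HasDerivAt (fun x : ℝ => α * (u - γ * x)) (α * -γ) n := by
    have := (((hasDerivAt_id n).const_mul γ).const_sub u).const_mul α
    simpa using this
  have h2 := (h1.exp.const_mul d).const_sub r
  have h3 := (h2.mul (hasDerivAt_id n)).const_add c
  simp only [id_eq, Pi.mul_apply] at h3
  have : Fb α γ u c r d = fun n : ℝ => c + (r - d * Real.exp (α * (u - γ * n))) * n := rfl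
  rw [this, h3.deriv]
  ring

/-- If `d·e^(αu) > r`, `n̄` is the unique positive critical point of `F`, and
`F(n̄) < 0`, then `F` has exactly two zeros `n₁ < n̄ < n₂` in `[0,∞)`, with
`F′(n₁) < 0` and `F′(n₂) > 0`. -/
theorem stmt_10 (α γ u c r d : ℝ) (hα : 0 < α) (hγ : 0 < γ) (hu : 0 < u)
    (hc : 0 < c) (hr : 0 < r) (hd : 0 < d)
    (h : r < d * Real.exp (α * u))
    (nbar : ℝ) (hnbar : 0 < nbar)
    (hcrit : deriv (Fb α γ u c r d) nbar = 0)
    (huniq : ∀ m : ℝ, 0 < m → deriv (Fb α γ u c r d) m = 0 → m = nbar)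
    (hFneg : Fb α γ u c r d nbar < 0) :
    ∃ n₁ n₂ : ℝ, 0 < n₁ ∧ n₁ < nbar ∧ nbar < n₂ ∧
      Fb α γ u c r d n₁ = 0 ∧ Fb α γ u c r d n₂ = 0 ∧
      (∀ n : ℝ, 0 ≤ n → Fb α γ u c r d n = 0 → n = n₁ ∨ n = n₂) ∧
      deriv (Fb α γ u c r d) n₁ < 0 ∧ 0 < deriv (Fb α γ u c r d) n₂ := by
  set D : ℝ → ℝ := fun n => r - d * Real.exp (α * (u - γ * n)) * (1 - α * γ * n) with hDdef
  have hderiv : deriv (Fb α γ u c r d) = D := Fb_deriv α γ u c r d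
  have hDcont : Continuous D := by
    unfold D; fun_prop
  have hFcont : Continuous (Fb α γ u c r d) := by
    unfold Fb; fun_prop
  have hD0 : D 0 < 0 := by
    have : D 0 = r - d * Real.exp (α * u) := by
      simp [hDdef]
    linarith [this]
  -- D is negative on [0, nbar)
  have hneg : ∀ n, 0 ≤ n → n < nbar → D n < 0 := by
    intro n hn0 hnlt
    by_contra hle
    push_neg at hle
    rcases eq_or_lt_of_le hn0 with h0 | h0
    · subst h0; linarith
    have hne : D n ≠ 0 := fun heq => absurd (huniq n h0 (by rw [hderiv]; exact heq)) (ne_of_lt hnlt)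
    have hpos : 0 < D n := lt_of_le_of_ne hle (Ne.symm hne)
    have hmem : (0 : ℝ) ∈ Set.Ioo (D 0) (D n) := ⟨hD0, hpos⟩
    obtain ⟨m, hmIoo, hDm⟩ := intermediate_value_Ioo hn0 hDcont.continuousOn hmem
    have := huniq m hmIoo.1 (by rw [hderiv]; exact hDm)
    linarith [hmIoo.2, this.symm ▸ hnlt, this ▸ hmIoo.2]
  -- D is positive on (nbar, ∞)
  have hpos : ∀ n, nbar < n → 0 < D n := by
    intro n hn
    by_contra hle
    push_neg at hle
    have hne : D n ≠ 0 := fun heq =>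
      absurd (huniq n (lt_trans hnbar hn) (by rw [hderiv]; exact heq)) (ne_of_gt hn)
    have hDn : D n < 0 := lt_of_le_of_ne hle hne
    set N : ℝ := max (n + 1) (1 / (α * γ)) with hNdef
    have hnN : n < N := lt_of_lt_of_le (lt_add_one n) (le_max_left _ _)
    have hαγ : 0 < α * γ := mul_pos hα hγ
    have hNge : 1 / (α * γ) ≤ N := le_max_right _ _
    have h1N : 1 - α * γ * N ≤ 0 := by
      have : 1 ≤ α * γ * N := by
        rw [div_le_iff₀ hαγ] at hNge
        linarith [hNge]
      linarith
    have hDN : 0 < D N := by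
      have he : 0 < Real.exp (α * (u - γ * N)) := Real.exp_pos _
      have : d * Real.exp (α * (u - γ * N)) * (1 - α * γ * N) ≤ 0 :=
        mul_nonpos_of_nonneg_of_nonpos (le_of_lt (mul_pos hd he)) h1N
      simp only [hDdef]
      linarith
    have hmem : (0 : ℝ) ∈ Set.Ioo (D n) (D N) := ⟨hDn, hDN⟩
    obtain ⟨m, hmIoo, hDm⟩ := intermediate_value_Ioo (le_of_lt hnN) hDcont.continuousOn hmem
    have hm := huniq m (lt_trans hnbar (lt_trans hn hmIoo.1)) (by rw [hderiv]; exact hDm)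
    have : nbar < m := lt_trans hn hmIoo.1
    rw [hm] at this
    exact lt_irrefl _ this
  -- strict monotonicity
  have hanti : StrictAntiOn (Fb α γ u c r d) (Set.Icc 0 nbar) := by
    apply strictAntiOn_of_deriv_neg (convex_Icc 0 nbar) hFcont.continuousOn
    intro x hx
    rw [interior_Icc] at hx
    rw [hderiv]
    exact hneg x (le_of_lt hx.1) hx.2
  have hmono : StrictMonoOn (Fb α γ u c r d) (Set.Ici nbar) := by
    apply strictMonoOn_of_deriv_pos (convex_Ici nbar) hFcont.continuousOn
    intro x hx
    rw [interior_Ici] at hx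
    rw [hderiv]
    exact hpos x hx
  -- zeros
  have hF0 : Fb α γ u c r d 0 = c := by simp [Fb]
  have hmem1 : (0 : ℝ) ∈ Set.Ioo (Fb α γ u c r d nbar) (Fb α γ u c r d 0) := by
    rw [hF0]; exact ⟨hFneg, hc⟩
  obtain ⟨n₁, hn₁Ioo, hFn₁⟩ :=
    intermediate_value_Ioo' (le_of_lt hnbar) hFcont.continuousOn hmem1
  -- a big point where Fb is positive
  set M : ℝ := max (nbar + 1) ((u - Real.log (r / d) / α) / γ + 1) with hMdef
  have hMnbar : nbar < M := lt_of_lt_of_le (lt_add_one nbar) (le_max_left _ _)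
  have hFM : 0 < Fb α γ u c r d M := by
    have hMge : (u - Real.log (r / d) / α) / γ < M :=
      lt_of_lt_of_le (lt_add_one _) (le_max_right _ _)
    have h1 : u - Real.log (r / d) / α < γ * M := by
      rw [div_lt_iff₀ hγ] at hMge
      linarith [hMge]
    have h2 : α * (u - γ * M) < Real.log (r / d) := by
      have : u - γ * M < Real.log (r / d) / α := by linarith
      calc α * (u - γ * M) < α * (Real.log (r / d) / α) := by
            exact (mul_lt_mul_iff_right₀ hα).mpr this
        _ = Real.log (r / d) := by field_simp
    have hrd : 0 < r / d := div_pos hr hd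
    have h3 : Real.exp (α * (u - γ * M)) < r / d := by
      calc Real.exp (α * (u - γ * M)) < Real.exp (Real.log (r / d)) := Real.exp_lt_exp.mpr h2
        _ = r / d := Real.exp_log hrd
    have h4 : d * Real.exp (α * (u - γ * M)) < r := by
      rw [lt_div_iff₀ hd] at h3
      linarith [h3]
    have hM0 : 0 < M := lt_trans hnbar hMnbar
    have : 0 < (r - d * Real.exp (α * (u - γ * M))) * M :=
      mul_pos (by linarith) hM0
    show 0 < c + (r - d * Real.exp (α * (u - γ * M))) * M
    linarith
  have hmem2 : (0 : ℝ) ∈ Set.Ioo (Fb α γ u c r d nbar) (Fb α γ u c r d M) := ⟨hFneg, hFM⟩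
  obtain ⟨n₂, hn₂Ioo, hFn₂⟩ :=
    intermediate_value_Ioo (le_of_lt hMnbar) hFcont.continuousOn hmem2
  refine ⟨n₁, n₂, hn₁Ioo.1, hn₁Ioo.2, hn₂Ioo.1, hFn₁, hFn₂, ?_, ?_, ?_⟩
  · intro n hn hFn
    by_cases hcase : n ≤ nbar
    · left
      exact hanti.injOn ⟨hn, hcase⟩ ⟨le_of_lt hn₁Ioo.1, le_of_lt hn₁Ioo.2⟩
        (hFn.trans hFn₁.symm)
    · right
      push_neg at hcase
      exact hmono.injOn (le_of_lt hcase) (le_of_lt hn₂Ioo.1) (hFn.trans hFn₂.symm)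
  · rw [hderiv]; exact hneg n₁ (le_of_lt hn₁Ioo.1) hn₁Ioo.2
  · rw [hderiv]; exact hpos n₂ hn₂Ioo.1
end

section
/- Define F(n) = c + (r − d·exp(α(u − γn)))·n, assume d·e^(αu) > r, let n̄ be the unique positive critical point of F, assume F(n̄) < 0, and let n₁ < n̄ < n₂ be the two zeros of F in (0,∞). Let n : [0,∞) → ℝ be differentiable with n′(t) = F(n(t)) for all t ≥ 0 and n(0) = n₀ ∈ [0, n₂). Then n(t) converges to n₁ as t → ∞. -/
/-!
Darboux's theorem and the uniqueness of the critical point `n̄` make `F` strictly decreasing on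
`[0, n̄]` and strictly increasing on `[n̄, n₂]`, so `F > 0` on `[0, n₁)` and `F < 0` on `(n₁, n₂)`;
since `F 0 = c > 0`, the first interval extends slightly below `0`. For a scalar autonomous
equation `n' = f n` with `f > 0` on `(lo, x)` and `f < 0` on `(x, hi)`, a trajectory started in
`(lo, hi)` cannot cross `x` nor leave `(lo, hi)`, hence is monotone and bounded; its limit `L`
satisfies `f L = 0`, because otherwise `n (t + 1) - n t → f L ≠ 0`, so `L = x`.
-/

open Set Filter Topology

theorem strictMonoOn_or_strictAntiOn_of_deriv_ne_zero {f : ℝ → ℝ} (hf : Differentiable ℝ f)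
    {a b : ℝ} (hderiv : ∀ x ∈ Ioo a b, deriv f x ≠ 0) :
    StrictMonoOn f (Icc a b) ∨ StrictAntiOn f (Icc a b) := by
  rcases hasDerivWithinAt_forall_lt_or_forall_gt_of_forall_ne (convex_Ioo a b)
      (fun x _ => (hf x).hasDerivAt.hasDerivWithinAt) hderiv with hneg | hpos
  · exact Or.inr <| strictAntiOn_of_deriv_neg (convex_Icc a b) hf.continuous.continuousOn
      (by rwa [interior_Icc])
  · exact Or.inl <| strictMonoOn_of_deriv_pos (convex_Icc a b) hf.continuous.continuousOn
      (by rwa [interior_Icc])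

theorem pos_and_neg_of_unique_critical_point {f : ℝ → ℝ} (hf : Differentiable ℝ f)
    {a p x₁ x₂ : ℝ} (hcrit : ∀ m, a < m → deriv f m = 0 → m = p) (hp : f p < 0)
    (ha : a ≤ x₁) (h₁ : x₁ < p) (h₂ : p < x₂) (hx₁ : f x₁ = 0) (hx₂ : f x₂ = 0) :
    (∀ w ∈ Ico a x₁, 0 < f w) ∧ ∀ w ∈ Ioo x₁ x₂, f w < 0 := by
  have hanti : StrictAntiOn f (Icc a p) := by
    refine (strictMonoOn_or_strictAntiOn_of_deriv_ne_zero hf fun m hm hm0 =>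
      hm.2.ne (hcrit m hm.1 hm0)).resolve_left fun hmono => ?_
    have := hmono ⟨ha, h₁.le⟩ ⟨ha.trans h₁.le, le_rfl⟩ h₁
    linarith
  have hmono : StrictMonoOn f (Icc p x₂) := by
    refine (strictMonoOn_or_strictAntiOn_of_deriv_ne_zero hf fun m hm hm0 =>
      hm.1.ne' (hcrit m (ha.trans_lt (h₁.trans hm.1)) hm0)).resolve_right fun hanti' => ?_
    have := hanti' ⟨le_rfl, h₂.le⟩ ⟨h₂.le, le_rfl⟩ h₂
    linarith
  refine ⟨fun w hw => hx₁ ▸ hanti ⟨hw.1, hw.2.le.trans h₁.le⟩ ⟨ha, h₁.le⟩ hw.2,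
    fun w hw => ?_⟩
  rcases le_total w p with hwp | hpw
  · exact hx₁ ▸ hanti ⟨ha, h₁.le⟩ ⟨ha.trans hw.1.le, hwp⟩ hw.1
  · exact hx₂ ▸ hmono ⟨hpw, hw.2.le⟩ ⟨h₂.le, le_rfl⟩ hw.2

theorem eq_zero_of_tendsto_of_hasDerivAt {n g : ℝ → ℝ} {L m : ℝ}
    (hderiv : ∀ t, 0 < t → HasDerivAt n (g t) t) (hn : Tendsto n atTop (𝓝 L))
    (hg : Tendsto g atTop (𝓝 m)) : m = 0 := by
  have hincr : Tendsto (fun t => n (t + 1) - n t) atTop (𝓝 0) := by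
    simpa using (hn.comp (tendsto_atTop_add_const_right _ 1 tendsto_id)).sub hn
  refine tendsto_nhds_unique ?_ hincr
  rw [Metric.tendsto_atTop] at hg ⊢
  intro ε hε
  obtain ⟨N, hN⟩ := hg ε hε
  refine ⟨max N 1, fun t ht => ?_⟩
  have ht0 : 0 < t := by linarith [le_max_right N 1]
  obtain ⟨ξ, hξ, hslope⟩ := exists_hasDerivAt_eq_slope n g (lt_add_one t)
    (fun x hx => (hderiv x (ht0.trans_le hx.1)).continuousAt.continuousWithinAt)
    (fun x hx => hderiv x (ht0.trans hx.1))
  rw [add_sub_cancel_left, div_one] at hslope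
  rw [← hslope]
  exact hN ξ (by linarith [le_max_left N 1, hξ.1])

theorem MonotoneOn.exists_tendsto_atTop {n : ℝ → ℝ} {a B : ℝ} (hmono : MonotoneOn n (Ici a))
    (hB : ∀ t, a ≤ t → n t ≤ B) : ∃ L, Tendsto n atTop (𝓝 L) := by
  have hN : Monotone fun t => n (max t a) := fun s t hst =>
    hmono (le_max_right s a) (le_max_right t a) (max_le_max hst le_rfl)
  refine ⟨_, (tendsto_atTop_ciSup hN ⟨B, ?_⟩).congr' ?_⟩
  · rintro _ ⟨t, rfl⟩
    exact hB _ (le_max_right t a)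
  · filter_upwards [eventually_ge_atTop a] with t ht
    rw [max_eq_left ht]

def IsForwardSolution (f n : ℝ → ℝ) : Prop :=
  ∀ t, 0 ≤ t → HasDerivWithinAt n (f (n t)) (Ici 0) t

namespace IsForwardSolution

variable {f n : ℝ → ℝ} (h : IsForwardSolution f n)
include h

theorem neg : IsForwardSolution (fun x => -f (-x)) (-n) := fun t ht => by
  simpa using (h t ht).neg

theorem continuousOn : ContinuousOn n (Ici 0) := fun t ht => (h t ht).continuousWithinAt

theorem hasDerivAt {t : ℝ} (ht : 0 < t) : HasDerivAt n (f (n t)) t :=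
  (h t ht.le).hasDerivAt (Ici_mem_nhds ht)

theorem monotoneOn (hf : ∀ t, 0 ≤ t → 0 ≤ f (n t)) : MonotoneOn n (Ici 0) :=
  monotoneOn_of_hasDerivWithinAt_nonneg (convex_Ici 0) h.continuousOn
    (fun t ht => (h.hasDerivAt (by simpa using ht)).hasDerivWithinAt)
    (fun t ht => hf t (interior_subset ht))

theorem le_of_nonpos_on_Ioo {y z : ℝ} (hyz : y < z) (hf : ∀ w ∈ Ioo y z, f w ≤ 0)
    (h0 : n 0 ≤ y) {t : ℝ} (ht : 0 ≤ t) : n t ≤ y := by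
  refine le_of_forall_pos_lt_add fun ε hε => ?_
  -- `n` stays below the line `y + δ (s + 1)`, which stays in `(y, z)` on `[0, t]`
  set δ := min ε (z - y) / (2 * (t + 1)) with hδ
  have hδpos : 0 < δ := by positivity
  have hδt : δ * (t + 1) = min ε (z - y) / 2 := by rw [hδ]; field_simp
  have hmin₁ := min_le_left ε (z - y)
  have hmin₂ := min_le_right ε (z - y)
  have hbound := image_le_of_deriv_right_lt_deriv_boundary' (B := fun s => y + δ * (s + 1))
    (B' := fun _ => δ) (h.continuousOn.mono Icc_subset_Ici_self)
    (fun s hs => (h s hs.1).mono (Ici_subset_Ici.2 hs.1)) (by nlinarith) (by fun_prop)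
    (fun s _ => by simpa using (((hasDerivAt_id s).add_const 1).const_mul δ).const_add y
      |>.hasDerivWithinAt)
    (fun s hs hns => by
      have : δ * (s + 1) ≤ δ * (t + 1) := by gcongr; exact hs.2.le
      exact (hf _ ⟨by rw [hns]; nlinarith [hs.1], by rw [hns]; linarith⟩).trans_lt hδpos)
    ⟨ht, le_rfl⟩
  linarith

theorem ge_of_nonneg_on_Ioo {y z : ℝ} (hzy : z < y) (hf : ∀ w ∈ Ioo z y, 0 ≤ f w)
    (h0 : y ≤ n 0) {t : ℝ} (ht : 0 ≤ t) : y ≤ n t := by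
  have := h.neg.le_of_nonpos_on_Ioo (neg_lt_neg hzy)
    (fun w hw => neg_nonpos.2 (hf (-w) ⟨lt_neg.1 hw.2, neg_lt.1 hw.1⟩))
    (neg_le_neg h0) ht
  simpa using this

theorem tendsto_of_le (hf : Continuous f) {lo x hi : ℝ} (hxhi : x < hi)
    (hpos : ∀ w ∈ Ioo lo x, 0 < f w) (hneg : ∀ w ∈ Ioo x hi, f w < 0) (hx : f x = 0)
    (hlo : lo < n 0) (hle : n 0 ≤ x) : Tendsto n atTop (𝓝 x) := by
  have hup : ∀ t, 0 ≤ t → n t ≤ x := fun t ht =>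
    h.le_of_nonpos_on_Ioo hxhi (fun w hw => (hneg w hw).le) hle ht
  have hlow : ∀ t, 0 ≤ t → n 0 ≤ n t := fun t ht =>
    h.ge_of_nonneg_on_Ioo hlo (fun w hw => (hpos w ⟨hw.1, hw.2.trans_le hle⟩).le) le_rfl ht
  have hf_nonneg : ∀ t, 0 ≤ t → 0 ≤ f (n t) := by
    intro t ht
    rcases (hup t ht).lt_or_eq with hlt | heq
    · exact (hpos _ ⟨hlo.trans_le (hlow t ht), hlt⟩).le
    · rw [heq, hx]
  obtain ⟨L, hL⟩ := (h.monotoneOn hf_nonneg).exists_tendsto_atTop hup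
  have hLx : L ≤ x := le_of_tendsto hL ((eventually_ge_atTop 0).mono hup)
  have hL0 : n 0 ≤ L := ge_of_tendsto hL ((eventually_ge_atTop 0).mono hlow)
  have hfL : f L = 0 :=
    eq_zero_of_tendsto_of_hasDerivAt (g := f ∘ n) (fun t ht => h.hasDerivAt ht) hL
      ((hf.tendsto L).comp hL)
  rcases hLx.lt_or_eq with hlt | rfl
  · exact absurd hfL (hpos L ⟨hlo.trans_le hL0, hlt⟩).ne'
  · exact hL

theorem tendsto (hf : Continuous f) {lo x hi : ℝ} (hlox : lo < x) (hxhi : x < hi)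
    (hpos : ∀ w ∈ Ioo lo x, 0 < f w) (hneg : ∀ w ∈ Ioo x hi, f w < 0) (hx : f x = 0)
    (h0 : n 0 ∈ Ioo lo hi) : Tendsto n atTop (𝓝 x) := by
  rcases le_total (n 0) x with hle | hge
  · exact h.tendsto_of_le hf hxhi hpos hneg hx h0.1 hle
  · have := h.neg.tendsto_of_le (by fun_prop) (neg_lt_neg hlox) (lo := -hi)
      (fun w hw => neg_pos.2 (hneg (-w) ⟨lt_neg.1 hw.2, neg_lt.1 hw.1⟩))
      (fun w hw => neg_lt_zero.2 (hpos (-w) ⟨lt_neg.1 hw.2, neg_lt.1 hw.1⟩))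
      (by simp [hx]) (by simpa using h0.2) (by simpa using hge)
    simpa using this.neg

end IsForwardSolution

theorem stmt_14_general (α γ u c r d : ℝ)
    (hc : 0 < c)
    (nbar : ℝ)
    (huniq : ∀ m : ℝ, 0 < m → deriv (Fb α γ u c r d) m = 0 → m = nbar)
    (hFneg : Fb α γ u c r d nbar < 0)
    (n₁ n₂ : ℝ) (hn₁ : 0 < n₁) (h₁bar : n₁ < nbar) (hbar₂ : nbar < n₂)
    (hz₁ : Fb α γ u c r d n₁ = 0) (hz₂ : Fb α γ u c r d n₂ = 0)
    (n : ℝ → ℝ)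
    (hderiv : ∀ t : ℝ, 0 ≤ t →
      HasDerivWithinAt n (Fb α γ u c r d (n t)) (Set.Ici 0) t)
    (h0 : 0 ≤ n 0) (h0' : n 0 < n₂) :
    Filter.Tendsto n Filter.atTop (nhds n₁) := by
  have hF : Differentiable ℝ (Fb α γ u c r d) := by unfold Fb; fun_prop
  obtain ⟨hpos, hneg⟩ := pos_and_neg_of_unique_critical_point hF huniq hFneg hn₁.le h₁bar hbar₂
    hz₁ hz₂
  have hF0 : ∀ᶠ w in 𝓝 0, 0 < Fb α γ u c r d w :=
    hF.continuous.continuousAt.eventually (lt_mem_nhds (by simpa [Fb] using hc))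
  obtain ⟨lo, hlo, hpos_lo⟩ := exists_Ioc_subset_of_mem_nhds hF0 ⟨-1, by norm_num⟩
  refine IsForwardSolution.tendsto hderiv hF.continuous (hlo.trans hn₁) (h₁bar.trans hbar₂)
    (fun w hw => ?_) hneg hz₁ ⟨hlo.trans_le h0, h0'⟩
  rcases le_total w 0 with hw0 | hw0
  · exact hpos_lo ⟨hw.1, hw0⟩
  · exact hpos w ⟨hw0, hw.2⟩

/-- Suppose `d·e^(αu) > r`, `n̄` is the unique positive critical point of `F`,
`F(n̄) < 0`, and `n₁ < n̄ < n₂` are the two zeros of `F` in `(0,∞)`. If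
`n : [0,∞) → ℝ` is differentiable with `n′(t) = F(n(t))` and
`n(0) = n₀ ∈ [0, n₂)`, then `n(t) → n₁` as `t → ∞`. -/
theorem stmt_14 (α γ u c r d : ℝ) (hα : 0 < α) (hγ : 0 < γ) (hu : 0 < u)
    (hc : 0 < c) (hr : 0 < r) (hd : 0 < d)
    (h : r < d * Real.exp (α * u))
    (nbar : ℝ) (hnbar : 0 < nbar)
    (hcrit : deriv (Fb α γ u c r d) nbar = 0)
    (huniq : ∀ m : ℝ, 0 < m → deriv (Fb α γ u c r d) m = 0 → m = nbar)
    (hFneg : Fb α γ u c r d nbar < 0)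
    (n₁ n₂ : ℝ) (hn₁ : 0 < n₁) (h₁bar : n₁ < nbar) (hbar₂ : nbar < n₂)
    (hz₁ : Fb α γ u c r d n₁ = 0) (hz₂ : Fb α γ u c r d n₂ = 0)
    (n : ℝ → ℝ)
    (hderiv : ∀ t : ℝ, 0 ≤ t →
      HasDerivWithinAt n (Fb α γ u c r d (n t)) (Set.Ici 0) t)
    (h0 : 0 ≤ n 0) (h0' : n 0 < n₂) :
    Filter.Tendsto n Filter.atTop (nhds n₁) :=
  stmt_14_general α γ u c r d hc nbar huniq hFneg n₁ n₂ hn₁ h₁bar hbar₂ hz₁ hz₂ n hderiv h0 h0'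
end
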